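/- arXiv:math/9801004 — 2 statements merged into one kernel-verified Lean document; each statement's English description precedes it below -/
import Mathlib

section
/- Let h : {1, 2, 3, …} → ℚ be any sequence, let G(q,s) = Σ_{n≥1} h_n qⁿ s^{2n−2}/(2n−2)! ∈ ℚ[[q,s]], and let D = q·∂/∂q. If h satisfies the recursion h_{n+1} = Σ_{l=1}^{n} ((2n−1)! · l² · (n+1−l)²) / ((2l−2)! · (2(n−l))! · (n+1)) · h_l · h_{n+1−l} for all n ≥ 1, then G satisfies the once-integrated equation ∂/∂s (DG) = s · (D²G)² in ℚ[[q,s]]. -/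
/-!
Both sides are power series supported on monomials `qᵃ sᵇ` with `b + 3 = 2a`, since `G`, `DG`
and `D²G` are supported on the monomials `qⁿ s²ⁿ⁻²`. At `q^(n+1) s^(2n-1)` the left side has
coefficient `2n (n+1) h_{n+1} / (2n)!` and the right side the convolution
`Σₗ l² h_l/(2l-2)! · (n+1-l)² h_{n+1-l}/(2(n-l))!`, so the equation is the recursion multiplied
by `(n+1)/(2n-1)!`.
-/

/-- The Euler-type derivation `D = q·∂/∂q` on `ℚ[[q,s]]`, where the variable `q`
corresponds to the index `0` and `s` to the index `1`. -/
noncomputable def Dq (F : MvPowerSeries (Fin 2) ℚ) : MvPowerSeries (Fin 2) ℚ :=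
  fun m => (m 0 : ℚ) * MvPowerSeries.coeff m F

/-- The formal partial derivative `∂/∂s` on `ℚ[[q,s]]`. -/
noncomputable def Ds (F : MvPowerSeries (Fin 2) ℚ) : MvPowerSeries (Fin 2) ℚ :=
  fun m => ((m 1 : ℚ) + 1) * MvPowerSeries.coeff (m + Finsupp.single 1 1) F

/-- The generating series `G(q,s) = Σ_{n ≥ 1} h_n qⁿ s^{2n−2}/(2n−2)!` in `ℚ[[q,s]]`. -/
noncomputable def genSeries (h : ℕ → ℚ) : MvPowerSeries (Fin 2) ℚ :=
  fun m => if 1 ≤ m 0 ∧ m 1 = 2 * m 0 - 2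
    then h (m 0) / ((2 * m 0 - 2).factorial : ℚ) else 0

open MvPowerSeries

section Diagonal

variable {R : Type*} [Semiring R]

lemma coeff_X_mul {σ : Type*} (i : σ) (φ : MvPowerSeries σ R) (m : σ →₀ ℕ) :
    coeff m (X i * φ) = if 1 ≤ m i then coeff (m - Finsupp.single i 1) φ else 0 := by
  rw [X_def, coeff_monomial_mul, one_mul]
  simp only [Finsupp.single_le_iff]

noncomputable def diagIndex (n : ℕ) : Fin 2 →₀ ℕ :=
  Finsupp.single 0 n + Finsupp.single 1 (2 * n - 2)

@[simp] lemma diagIndex_apply_zero (n : ℕ) : diagIndex n 0 = n := by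
  simp [diagIndex]

@[simp] lemma diagIndex_apply_one (n : ℕ) : diagIndex n 1 = 2 * n - 2 := by
  simp [diagIndex]

lemma eq_diagIndex_iff {m : Fin 2 →₀ ℕ} {n : ℕ} :
    m = diagIndex n ↔ m 0 = n ∧ m 1 = 2 * n - 2 := by
  refine ⟨by rintro rfl; simp, fun ⟨h0, h1⟩ => Finsupp.ext fun i => ?_⟩
  fin_cases i <;> simp [h0, h1]

noncomputable def diagSeries (c : ℕ → R) : MvPowerSeries (Fin 2) R :=
  fun m => if 1 ≤ m 0 ∧ m 1 = 2 * m 0 - 2 then c (m 0) else 0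

lemma coeff_diagSeries (c : ℕ → R) (m : Fin 2 →₀ ℕ) :
    coeff m (diagSeries c) = if 1 ≤ m 0 ∧ m 1 = 2 * m 0 - 2 then c (m 0) else 0 := rfl

lemma coeff_diagSeries_diagIndex (c : ℕ → R) {n : ℕ} (hn : 1 ≤ n) :
    coeff (diagIndex n) (diagSeries c) = c n := by
  simp [coeff_diagSeries, hn]

lemma eq_diagIndex_of_coeff_diagSeries_ne_zero {c : ℕ → R} {m : Fin 2 →₀ ℕ}
    (hm : coeff m (diagSeries c) ≠ 0) : 1 ≤ m 0 ∧ m = diagIndex (m 0) := by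
  rw [coeff_diagSeries] at hm
  split_ifs at hm with h
  · exact ⟨h.1, eq_diagIndex_iff.2 ⟨rfl, h.2⟩⟩
  · exact absurd rfl hm

lemma eq_diagIndex_pair_of_coeff_mul_ne_zero {f g : ℕ → R} {p : (Fin 2 →₀ ℕ) × (Fin 2 →₀ ℕ)}
    (hp : coeff p.1 (diagSeries f) * coeff p.2 (diagSeries g) ≠ 0) :
    1 ≤ p.1 0 ∧ 1 ≤ p.2 0 ∧ p = (diagIndex (p.1 0), diagIndex (p.2 0)) := by
  obtain ⟨h1, e1⟩ := eq_diagIndex_of_coeff_diagSeries_ne_zero (left_ne_zero_of_mul hp)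
  obtain ⟨h2, e2⟩ := eq_diagIndex_of_coeff_diagSeries_ne_zero (right_ne_zero_of_mul hp)
  exact ⟨h1, h2, Prod.ext e1 e2⟩

lemma coeff_diagSeries_mul (f g : ℕ → R) (m : Fin 2 →₀ ℕ) :
    coeff m (diagSeries f * diagSeries g) =
      if 2 ≤ m 0 ∧ m 1 + 4 = 2 * m 0 then
        ∑ l ∈ Finset.Icc 1 (m 0 - 1), f l * g (m 0 - l) else 0 := by
  classical
  rw [coeff_mul]
  split_ifs with hm
  · set a := m 0
    have subset : (Finset.Icc 1 (a - 1)).image (fun l => (diagIndex l, diagIndex (a - l))) ⊆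
        Finset.HasAntidiagonal.antidiagonal m := by
      intro p hp
      obtain ⟨l, hl, rfl⟩ := Finset.mem_image.1 hp
      rw [Finset.mem_Icc] at hl
      rw [Finset.HasAntidiagonal.mem_antidiagonal]
      ext i
      fin_cases i <;>
        simp only [Fin.zero_eta, Fin.mk_one, Finsupp.coe_add, Pi.add_apply, diagIndex_apply_zero,
          diagIndex_apply_one] <;> omega
    rw [← Finset.sum_subset subset, Finset.sum_image]
    · refine Finset.sum_congr rfl fun l hl => ?_
      rw [Finset.mem_Icc] at hl
      rw [coeff_diagSeries_diagIndex _ hl.1, coeff_diagSeries_diagIndex _ (by omega)]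
    · intro l _ k _ hlk
      simpa using congrArg (fun p => p.1 0) hlk
    · intro p hp hp_notin
      by_contra hne
      obtain ⟨h1, h2, hp'⟩ := eq_diagIndex_pair_of_coeff_mul_ne_zero hne
      have h0 := congrArg (· 0) (Finset.HasAntidiagonal.mem_antidiagonal.1 hp)
      simp only [Finsupp.add_apply] at h0
      refine hp_notin (Finset.mem_image.2 ⟨p.1 0, Finset.mem_Icc.2 ⟨h1, by omega⟩, ?_⟩)
      rw [hp']
      simp only [diagIndex_apply_zero]
      congr 2
      omega
  · refine Finset.sum_eq_zero fun p hp => by_contra fun hne => hm ?_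
    obtain ⟨h1, h2, hp'⟩ := eq_diagIndex_pair_of_coeff_mul_ne_zero hne
    rw [Finset.HasAntidiagonal.mem_antidiagonal, hp'] at hp
    have h0 := congrArg (· 0) hp
    have h1' := congrArg (· 1) hp
    simp only [Finsupp.coe_add, Pi.add_apply, diagIndex_apply_zero, diagIndex_apply_one] at h0 h1'
    omega

lemma coeff_X_one_mul_diagSeries_mul (f g : ℕ → R) (m : Fin 2 →₀ ℕ) :
    coeff m (X 1 * (diagSeries f * diagSeries g)) =
      if m 1 + 3 = 2 * m 0 then ∑ l ∈ Finset.Icc 1 (m 0 - 1), f l * g (m 0 - l) else 0 := by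
  rw [coeff_X_mul, coeff_diagSeries_mul]
  simp only [Finsupp.tsub_apply, Finsupp.single_eq_same,
    Finsupp.single_eq_of_ne (by decide : (0 : Fin 2) ≠ 1), tsub_zero]
  by_cases hm : m 1 + 3 = 2 * m 0
  · rw [if_pos (by omega), if_pos (by omega), if_pos hm]
  · rw [if_neg hm]
    split_ifs <;> first | rfl | omega

end Diagonal

lemma Dq_diagSeries (c : ℕ → ℚ) : Dq (diagSeries c) = diagSeries (fun n => n * c n) := by
  ext m
  change (m 0 : ℚ) * coeff m (diagSeries c) = _
  simp only [coeff_diagSeries]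
  split_ifs <;> simp

lemma coeff_Ds_diagSeries (c : ℕ → ℚ) (m : Fin 2 →₀ ℕ) :
    coeff m (Ds (diagSeries c)) = if m 1 + 3 = 2 * m 0 then (m 1 + 1) * c (m 0) else 0 := by
  change ((m 1 : ℚ) + 1) * coeff (m + Finsupp.single 1 1) (diagSeries c) = _
  simp only [coeff_diagSeries, Finsupp.add_apply, Finsupp.single_eq_same,
    Finsupp.single_eq_of_ne (by decide : (0 : Fin 2) ≠ 1), add_zero]
  by_cases hm : m 1 + 3 = 2 * m 0
  · rw [if_pos (by omega), if_pos hm]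
  · rw [if_neg (by omega), if_neg hm, mul_zero]

lemma genSeries_eq_diagSeries (h : ℕ → ℚ) :
    genSeries h = diagSeries (fun n => h n / (2 * n - 2).factorial) := rfl

lemma recursion_coeff_identity (h : ℕ → ℚ) {n : ℕ} (hn : 1 ≤ n)
    (hrec : h (n + 1) = ∑ l ∈ Finset.Icc 1 n,
        (((2 * n - 1).factorial : ℚ) * (l : ℚ) ^ 2 * ((n + 1 - l : ℕ) : ℚ) ^ 2) /
            (((2 * l - 2).factorial : ℚ) * ((2 * (n - l)).factorial : ℚ) * ((n : ℚ) + 1)) *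
          h l * h (n + 1 - l)) :
    2 * n * ((n + 1 : ℕ) * (h (n + 1) / (2 * (n + 1) - 2).factorial)) =
      ∑ l ∈ Finset.Icc 1 n, l * (l * (h l / (2 * l - 2).factorial)) *
        ((n + 1 - l : ℕ) * ((n + 1 - l : ℕ) * (h (n + 1 - l) / (2 * (n + 1 - l) - 2).factorial))) := by
  have factorial_eq : (2 * (n + 1) - 2).factorial = 2 * n * (2 * n - 1).factorial := by
    rw [show 2 * (n + 1) - 2 = 2 * n - 1 + 1 by omega, Nat.factorial_succ,
      show 2 * n - 1 + 1 = 2 * n by omega]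
  rw [hrec, Finset.sum_div, Finset.mul_sum, Finset.mul_sum, factorial_eq]
  refine Finset.sum_congr rfl fun l _ => ?_
  rw [show 2 * (n + 1 - l) - 2 = 2 * (n - l) by omega]
  have hn0 : (n : ℚ) ≠ 0 := by exact_mod_cast (by omega : n ≠ 0)
  push_cast
  field_simp

/-- **Once-integrated topological recursion relation for `ℂP¹`.**
If the sequence `h` of rational numbers satisfies the recursion
`h_{n+1} = Σ_{l=1}^{n} ((2n−1)!·l²·(n+1−l)²)/((2l−2)!·(2(n−l))!·(n+1))·h_l·h_{n+1−l}`
for all `n ≥ 1`, then `G = Σ_{n≥1} h_n qⁿ s^{2n−2}/(2n−2)!` satisfies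
`∂/∂s(DG) = s·(D²G)²` in `ℚ[[q,s]]`. -/
theorem recursion_implies_integrated_trr (h : ℕ → ℚ)
    (hrec : ∀ n : ℕ, 1 ≤ n →
      h (n + 1) = ∑ l ∈ Finset.Icc 1 n,
        (((2 * n - 1).factorial : ℚ) * (l : ℚ) ^ 2 * ((n + 1 - l : ℕ) : ℚ) ^ 2) /
            (((2 * l - 2).factorial : ℚ) * ((2 * (n - l)).factorial : ℚ) * ((n : ℚ) + 1)) *
          h l * h (n + 1 - l)) :
    Ds (Dq (genSeries h)) = MvPowerSeries.X 1 * (Dq (Dq (genSeries h))) ^ 2 := by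
  ext m
  rw [genSeries_eq_diagSeries, Dq_diagSeries, Dq_diagSeries, coeff_Ds_diagSeries, sq,
    coeff_X_one_mul_diagSeries_mul]
  split_ifs with hm
  · obtain ⟨n, hn, hm0⟩ : ∃ n, 1 ≤ n ∧ m 0 = n + 1 := ⟨m 0 - 1, by omega, by omega⟩
    have hm1 : (m 1 : ℚ) + 1 = 2 * n := by exact_mod_cast (by omega : m 1 + 1 = 2 * n)
    rw [hm0, hm1, Nat.add_sub_cancel]
    exact recursion_coeff_identity h hn (hrec n hn)
  · rfl
end

section
/- Let h : {1, 2, 3, …} → ℚ satisfy h₁ = 1 and the recursion h_{n+1} = Σ_{l=1}^{n} ((2n−1)! · l² · (n+1−l)²) / ((2l−2)! · (2(n−l))! · (n+1)) · h_l · h_{n+1−l} for all n ≥ 1, and set φ(z) = Σ_{n≥1} n·h_n·zⁿ/(2n−2)! ∈ ℚ[[z]]. Then there exists a unique formal power series u ∈ ℚ[[z]] with constant term 1 such that u² = 1 − 2φ, and this u satisfies the transcendental equation (1 − u)·exp(u − 1) = z in ℚ[[z]], where exp(u−1) denotes the formal exponential of the power series u − 1 (which has zero constant term). -/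
/-!
With `ψ = z·φ'(z)`, the recursion for `h` is the coefficientwise form of `ψ² = 2ψ − 2φ`, so
`u = 1 − ψ` is the square root of `1 − 2φ` (unique, as the constant term is `1`).
Differentiating gives `φ' = (1 − ψ)ψ'`, that is `ψ = z(1 − ψ)ψ'`. Then `g = ψ·exp(−ψ)`
satisfies `z·g' = g`, which forces `g = g₁·z = z`.
-/

open PowerSeries

/-- The one-variable series `φ(z) = Σ_{n≥1} n·h_n·zⁿ/(2n−2)!` in `ℚ[[z]]`
(the `n = 0` term vanishes because of the factor `n`). -/
noncomputable def phiSeries (h : ℕ → ℚ) : PowerSeries ℚ :=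
  PowerSeries.mk fun n => (n : ℚ) * h n / ((2 * n - 2).factorial : ℚ)

/-- The formal exponential `exp(v) = Σ_k vᵏ/k!` of a power series `v`.  For `v` with
zero constant term the `n`-th coefficient only receives contributions from `k ≤ n`,
so it is the finite sum `Σ_{k=0}^{n} coeff n (vᵏ)/k!`. -/
noncomputable def expOf (v : PowerSeries ℚ) : PowerSeries ℚ :=
  PowerSeries.mk fun n =>
    ∑ k ∈ Finset.range (n + 1), PowerSeries.coeff n (v ^ k) / (k.factorial : ℚ)

open Finset

namespace PowerSeries

variable {R : Type*}

theorem coeff_X_mul_derivative [CommSemiring R] (f : R⟦X⟧) (n : ℕ) :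
    coeff n (X * d⁄dX R f) = n * coeff n f := by
  cases n with
  | zero => simp
  | succ n => rw [coeff_succ_X_mul, coeff_derivative, mul_comm, Nat.cast_succ]

theorem coeff_add_two_mul_of_constantCoeff_eq_zero [CommSemiring R] {f g : R⟦X⟧}
    (hf : constantCoeff f = 0) (hg : constantCoeff g = 0) (n : ℕ) :
    coeff (n + 2) (f * g) = ∑ p ∈ antidiagonal n, coeff (p.1 + 1) f * coeff (p.2 + 1) g := by
  rw [coeff_mul, Nat.sum_antidiagonal_succ, Nat.sum_antidiagonal_succ']
  simp [hf, hg]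

theorem coeff_pow_eq_zero_of_lt [CommSemiring R] {v : R⟦X⟧} (hv : constantCoeff v = 0)
    {k n : ℕ} (h : n < k) : coeff n (v ^ k) = 0 :=
  X_pow_dvd_iff.mp (pow_dvd_pow_of_dvd (X_dvd_iff.mpr hv) k) n h

theorem eq_C_mul_X_of_X_mul_derivative_eq [CommRing R] [NoZeroDivisors R] [CharZero R] {g : R⟦X⟧}
    (hg : X * d⁄dX R g = g) : g = C (coeff 1 g) * X := by
  ext n
  have hn := congrArg (coeff n) hg
  rw [coeff_X_mul_derivative] at hn
  rcases eq_or_ne n 1 with rfl | hn1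
  · simp
  · rw [coeff_C_mul, coeff_X, if_neg hn1, mul_zero]
    have : ((n : R) - 1) * coeff n g = 0 := by linear_combination hn
    exact (mul_eq_zero.mp this).resolve_left (sub_ne_zero.mpr (by exact_mod_cast hn1))

theorem eq_of_sq_eq_sq_of_constantCoeff_eq_one [CommRing R] [NoZeroDivisors R] [NeZero (2 : R)]
    {u v : R⟦X⟧} (hu : constantCoeff u = 1) (hv : constantCoeff v = 1) (h : u ^ 2 = v ^ 2) :
    u = v := by
  refine (sq_eq_sq_iff_eq_or_eq_neg.mp h).resolve_right fun huv => two_ne_zero (α := R) ?_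
  have := congrArg constantCoeff huv
  rw [map_neg, hu, hv] at this
  linear_combination this

end PowerSeries

theorem Finset.Nat.sum_Icc_one_eq_sum_antidiagonal {M : Type*} [AddCommMonoid M] (f : ℕ → M)
    (m : ℕ) : ∑ l ∈ Icc 1 (m + 1), f l = ∑ p ∈ antidiagonal m, f (p.1 + 1) := by
  rw [Nat.sum_antidiagonal_eq_sum_range_succ_mk, ← Ico_add_one_right_eq_Icc, sum_Ico_eq_sum_range]
  simp [add_comm]

theorem expOf_eq_subst_exp {v : ℚ⟦X⟧} (hv : constantCoeff v = 0) :
    expOf v = (exp ℚ).subst v := by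
  ext n
  rw [coeff_subst' (HasSubst.of_constantCoeff_zero' hv), expOf, coeff_mk,
    finsum_eq_sum_of_support_subset (s := range (n + 1))]
  · simp [coeff_exp, div_eq_inv_mul]
  · intro k hk
    by_contra hkn
    simp only [coe_range, Set.mem_Iio, not_lt] at hkn
    simp [coeff_pow_eq_zero_of_lt hv (Nat.lt_of_succ_le hkn)] at hk

theorem constantCoeff_expOf (v : ℚ⟦X⟧) : constantCoeff (expOf v) = 1 := by
  rw [expOf, ← coeff_zero_eq_constantCoeff_apply, coeff_mk]
  simp

theorem derivative_expOf {v : ℚ⟦X⟧} (hv : constantCoeff v = 0) :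
    d⁄dX ℚ (expOf v) = expOf v * d⁄dX ℚ v := by
  rw [expOf_eq_subst_exp hv, derivative_subst (HasSubst.of_constantCoeff_zero' hv), derivative_exp]

theorem mul_expOf_neg_eq_X {ψ : ℚ⟦X⟧} (hψ : ψ = X * ((1 - ψ) * d⁄dX ℚ ψ))
    (hψ1 : coeff 1 ψ = 1) : ψ * expOf (-ψ) = X := by
  have hψ0 : constantCoeff ψ = 0 := by rw [hψ]; simp
  have hg : X * d⁄dX ℚ (ψ * expOf (-ψ)) = ψ * expOf (-ψ) := by
    rw [Derivation.leibniz, derivative_expOf (by simp [hψ0]), smul_eq_mul, smul_eq_mul, map_neg]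
    linear_combination (-expOf (-ψ)) * hψ
  rw [eq_C_mul_X_of_X_mul_derivative_eq hg]
  simp [coeff_mul, Nat.sum_antidiagonal_succ, hψ0, hψ1, constantCoeff_expOf]

noncomputable def psiSeries (h : ℕ → ℚ) : ℚ⟦X⟧ := X * d⁄dX ℚ (phiSeries h)

theorem coeff_psiSeries (h : ℕ → ℚ) (n : ℕ) :
    coeff n (psiSeries h) = n * ((n : ℚ) * h n / ((2 * n - 2).factorial : ℚ)) := by
  rw [psiSeries, coeff_X_mul_derivative, phiSeries, coeff_mk]

theorem psiSeries_sq (h : ℕ → ℚ) (hrec : ∀ n : ℕ, 1 ≤ n →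
      h (n + 1) = ∑ l ∈ Icc 1 n,
        (((2 * n - 1).factorial : ℚ) * (l : ℚ) ^ 2 * ((n + 1 - l : ℕ) : ℚ) ^ 2) /
            (((2 * l - 2).factorial : ℚ) * ((2 * (n - l)).factorial : ℚ) * ((n : ℚ) + 1)) *
          h l * h (n + 1 - l)) :
    psiSeries h ^ 2 = 2 * psiSeries h - 2 * phiSeries h := by
  have hψ0 : constantCoeff (psiSeries h) = 0 := by simp [psiSeries]
  ext n
  rcases n with _ | _ | m
  · rw [coeff_zero_eq_constantCoeff_apply]
    simp [sq, hψ0, phiSeries]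
  · simp [sq, coeff_mul, Nat.sum_antidiagonal_succ, coeff_psiSeries, phiSeries]
  · have hrhs : coeff (m + 2) (2 * psiSeries h - 2 * phiSeries h) =
        2 * ((m : ℚ) + 2) * (m + 1) / ((2 * m + 2).factorial : ℚ) * h (m + 2) := by
      have h2 : ∀ f : ℚ⟦X⟧, coeff (m + 2) (2 * f) = 2 * coeff (m + 2) f := fun f => by
        rw [← map_ofNat C 2, coeff_C_mul]
      rw [map_sub, h2, h2, coeff_psiSeries, phiSeries, coeff_mk,
        show 2 * (m + 2) - 2 = 2 * m + 2 by omega]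
      push_cast
      ring
    rw [sq, coeff_add_two_mul_of_constantCoeff_eq_zero hψ0 hψ0, hrhs, hrec (m + 1) (by omega),
      Nat.sum_Icc_one_eq_sum_antidiagonal, mul_sum]
    -- `2(m+2)(m+1)/(2m+2)!` cancels against the weight `(2m+1)!/(m+2)` of the recursion.
    refine sum_congr rfl fun ⟨i, j⟩ hij => ?_
    obtain rfl : m = i + j := (HasAntidiagonal.mem_antidiagonal.mp hij).symm
    simp only [coeff_psiSeries]
    rw [show i + j + 1 + 1 - (i + 1) = j + 1 by omega,
      show 2 * (i + j + 1) - 1 = 2 * (i + j) + 1 by omega,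
      show 2 * (i + 1) - 2 = 2 * i by omega, show 2 * (j + 1) - 2 = 2 * j by omega,
      show i + j + 1 - (i + 1) = j by omega, show 2 * (i + j) + 2 = 2 * (i + j) + 1 + 1 by rfl,
      Nat.factorial_succ]
    push_cast
    field_simp
    ring

theorem psiSeries_eq_X_mul (h : ℕ → ℚ)
    (hsq : psiSeries h ^ 2 = 2 * psiSeries h - 2 * phiSeries h) :
    psiSeries h = X * ((1 - psiSeries h) * d⁄dX ℚ (psiSeries h)) := by
  have hD2 : d⁄dX ℚ (2 : ℚ⟦X⟧) = 0 := by exact_mod_cast (d⁄dX ℚ).map_natCast 2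
  have h2 : (2 : ℚ⟦X⟧) ≠ 0 := by
    rw [← map_ofNat C 2]
    exact (map_ne_zero_iff _ C_injective).mpr two_ne_zero
  have hD := congrArg (d⁄dX ℚ) hsq
  simp only [sq, Derivation.leibniz, map_sub, smul_eq_mul, hD2, mul_zero, add_zero] at hD
  have hφ' : d⁄dX ℚ (phiSeries h) = (1 - psiSeries h) * d⁄dX ℚ (psiSeries h) :=
    mul_left_cancel₀ h2 (by linear_combination hD)
  rw [← hφ', psiSeries]

/-- **The transcendental equation for the reduced `ℂP¹` potential.**
If `h₁ = 1` and `h` satisfies the recursion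
`h_{n+1} = Σ_{l=1}^{n} ((2n−1)!·l²·(n+1−l)²)/((2l−2)!·(2(n−l))!·(n+1))·h_l·h_{n+1−l}`
for all `n ≥ 1`, and `φ(z) = Σ_{n≥1} n·h_n·zⁿ/(2n−2)!`, then there is a unique formal
power series `u ∈ ℚ[[z]]` with constant term `1` such that `u² = 1 − 2φ`, and this `u`
satisfies `(1 − u)·exp(u − 1) = z` in `ℚ[[z]]`. -/
theorem transcendental_equation (h : ℕ → ℚ) (h1 : h 1 = 1)
    (hrec : ∀ n : ℕ, 1 ≤ n →
      h (n + 1) = ∑ l ∈ Finset.Icc 1 n,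
        (((2 * n - 1).factorial : ℚ) * (l : ℚ) ^ 2 * ((n + 1 - l : ℕ) : ℚ) ^ 2) /
            (((2 * l - 2).factorial : ℚ) * ((2 * (n - l)).factorial : ℚ) * ((n : ℚ) + 1)) *
          h l * h (n + 1 - l)) :
    (∃! u : PowerSeries ℚ,
        constantCoeff u = 1 ∧ u ^ 2 = 1 - 2 * phiSeries h) ∧
      ∀ u : PowerSeries ℚ, constantCoeff u = 1 → u ^ 2 = 1 - 2 * phiSeries h →
        (1 - u) * expOf (u - 1) = X := by
  have hsq := psiSeries_sq h hrec
  have hroot₀ : constantCoeff (1 - psiSeries h) = 1 := by simp [psiSeries]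
  have hroot : (1 - psiSeries h) ^ 2 = 1 - 2 * phiSeries h := by linear_combination hsq
  have huniq : ∀ u : ℚ⟦X⟧, constantCoeff u = 1 → u ^ 2 = 1 - 2 * phiSeries h →
      u = 1 - psiSeries h := fun u hu hu2 =>
    eq_of_sq_eq_sq_of_constantCoeff_eq_one hu hroot₀ (hu2.trans hroot.symm)
  refine ⟨⟨1 - psiSeries h, ⟨hroot₀, hroot⟩, fun u hu => huniq u hu.1 hu.2⟩, fun u hu hu2 => ?_⟩
  have hψ1 : coeff 1 (psiSeries h) = 1 := by simp [coeff_psiSeries, h1]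
  rw [huniq u hu hu2, sub_sub_cancel, sub_sub_cancel_left]
  exact mul_expOf_neg_eq_X (psiSeries_eq_X_mul h hsq) hψ1
end
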